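/- For all L_OR formulas θ₀(x, z̄) and θ₁(x, z̄), there is an inductive formula φ(x) such that PA⁻ ⊢ ∀x φ(x) → (I θ₀ ∧ I θ₁). -/

import Mathlib

open FirstOrder Language

/-! ### The language `L_OR = {0, 1, +, ×, <}` of ordered rings -/

/-- Function symbols of the language of ordered rings. -/
inductive LorFunc : ℕ → Type
  | zero : LorFunc 0
  | one : LorFunc 0
  | add : LorFunc 2
  | mul : LorFunc 2

/-- Relation symbols of the language of ordered rings: just `<`. -/
inductive LorRel : ℕ → Type
  | lt : LorRel 2

/-- The first-order language of ordered rings. -/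
def Lor : Language := ⟨LorFunc, LorRel⟩

/-- The term `0`. -/
def zeroT {α : Type} : Lor.Term α := Constants.term LorFunc.zero

/-- The term `1`. -/
def oneT {α : Type} : Lor.Term α := Constants.term LorFunc.one

/-- Addition of terms. -/
def addT {α : Type} (t u : Lor.Term α) : Lor.Term α := Functions.apply₂ LorFunc.add t u

/-- Multiplication of terms. -/
def mulT {α : Type} (t u : Lor.Term α) : Lor.Term α := Functions.apply₂ LorFunc.mul t u

/-- The term `2`, an abbreviation for `1 + 1`. -/
def twoT {α : Type} : Lor.Term α := addT oneT oneT

/-- The numeral `k`, i.e. the closed term `(⋯((0+1)+1)+⋯+1)` with `k` ones. -/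
def numT {α : Type} : ℕ → Lor.Term α
  | 0 => zeroT
  | n + 1 => addT (numT n) oneT

/-- The bounded formula `t < u`. -/
def ltBF {α : Type} {n : ℕ} (t u : Lor.Term (α ⊕ Fin n)) : Lor.BoundedFormula α n :=
  Relations.boundedFormula₂ LorRel.lt t u

/-- The formula `t < u`. -/
def ltFml {α : Type} (t u : Lor.Term α) : Lor.Formula α :=
  Relations.formula₂ LorRel.lt t u

/-- The formula `t ≤ u`, an abbreviation for `t < u ∨ t = u`. -/
def leFml {α : Type} (t u : Lor.Term α) : Lor.Formula α :=
  ltFml t u ⊔ Term.equal t u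

/-! ### The base theory `PA⁻` -/

/-- `PA⁻`, the theory of non-negative parts of discretely ordered rings. -/
def PAminus : Lor.Theory :=
  { -- (P1) associativity of +
    ∀' ∀' ∀' (addT (addT &0 &1) &2 =' addT &0 (addT &1 &2)),
    -- (P2) commutativity of +
    ∀' ∀' (addT &0 &1 =' addT &1 &0),
    -- (P3) associativity of ×
    ∀' ∀' ∀' (mulT (mulT &0 &1) &2 =' mulT &0 (mulT &1 &2)),
    -- (P4) commutativity of ×
    ∀' ∀' (mulT &0 &1 =' mulT &1 &0),
    -- (P5) distributivity
    ∀' ∀' ∀' (mulT &0 (addT &1 &2) =' addT (mulT &0 &1) (mulT &0 &2)),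
    -- (P6) x + 0 = x
    ∀' (addT &0 zeroT =' &0),
    -- (P7) x × 0 = 0
    ∀' (mulT &0 zeroT =' zeroT),
    -- (P8) x × 1 = x
    ∀' (mulT &0 oneT =' &0),
    -- (P9) transitivity of <
    ∀' ∀' ∀' (ltBF &0 &1 ⊓ ltBF &1 &2 ⟹ ltBF &0 &2),
    -- (P10) irreflexivity of <
    ∀' ∼(ltBF &0 &0),
    -- (P11) linearity of <
    ∀' ∀' (ltBF &0 &1 ⊔ &0 =' &1 ⊔ ltBF &1 &0),
    -- (P12) x < y → x + z < y + z
    ∀' ∀' ∀' (ltBF &0 &1 ⟹ ltBF (addT &0 &2) (addT &1 &2)),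
    -- (P13) z ≠ 0 ∧ x < y → x × z < y × z
    ∀' ∀' ∀' (∼(&2 =' zeroT) ⊓ ltBF &0 &1 ⟹ ltBF (mulT &0 &2) (mulT &1 &2)),
    -- (P14) x < y ↔ ∃z ((x + z) + 1 = y)
    ∀' ∀' (ltBF &0 &1 ⇔ ∃' (addT (addT &0 &2) oneT =' &1)),
    -- (P15) 0 < 1 ∧ (x > 0 → x ≥ 1)
    ltBF zeroT oneT ⊓ ∀' (ltBF zeroT &0 ⟹ ltBF oneT &0 ⊔ oneT =' &0),
    -- (P16) x ≥ 0
    ∀' (ltBF zeroT &0 ⊔ zeroT =' &0) }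

/-! ### Formulas `θ(x, z̄)` with a distinguished variable `x` and parameters `z̄`

A formula `θ(x, z̄)` with `m` parameters `z̄` and a distinguished induction
variable `x` is represented as `θ : Lor.Formula (Fin m ⊕ Fin 1)`, where the
`Fin m` component gives the parameters and the `Fin 1` component gives `x`. -/

/-- The distinguished variable `x` as a term. -/
def xT {m : ℕ} : Lor.Term (Fin m ⊕ Fin 1) := Term.var (Sum.inr 0)

/-- `θ(t, z̄)`, where `t` is a term possibly involving `x` and the parameters. -/
def substX {m : ℕ} (θ : Lor.Formula (Fin m ⊕ Fin 1)) (t : Lor.Term (Fin m ⊕ Fin 1)) :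
    Lor.Formula (Fin m ⊕ Fin 1) :=
  θ.subst (Sum.elim (fun i => Term.var (Sum.inl i)) fun _ => t)

/-- `θ(t, z̄)` where `t` is a term in the parameters only. -/
def substP {m : ℕ} (θ : Lor.Formula (Fin m ⊕ Fin 1)) (t : Lor.Term (Fin m)) :
    Lor.Formula (Fin m) :=
  θ.subst (Sum.elim (fun i => Term.var i) fun _ => t)

/-- `Formula.iAlls` with its older signature (a relabelling `f : α → β ⊕ γ` applied first),
spelled out verbatim from the older Mathlib definition. -/
noncomputable def iAllsOld {L : Language} {α β γ : Type*} [Finite γ] (f : α → β ⊕ γ)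
    (φ : L.Formula α) : L.Formula β :=
  let e := Classical.choice (Classical.choose_spec (Finite.exists_equiv_fin γ))
  (BoundedFormula.relabel (fun a => Sum.map id e (f a)) φ).alls

/-- `∀x θ(x, z̄)`. -/
noncomputable def allX {m : ℕ} (θ : Lor.Formula (Fin m ⊕ Fin 1)) : Lor.Formula (Fin m) :=
  iAllsOld (fun p => p : Fin m ⊕ Fin 1 → Fin m ⊕ Fin 1) θ

/-- The universal closure of a formula, as a sentence. -/
noncomputable def closeAll {α : Type} [Finite α] (φ : Lor.Formula α) : Lor.Sentence :=
  iAllsOld (Sum.inr : α → Empty ⊕ α) φ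

/-- `∀x' < x, θ(x', z̄)`, a formula with free variable `x` (and parameters). -/
noncomputable def allLtX {m : ℕ} (θ : Lor.Formula (Fin m ⊕ Fin 1)) :
    Lor.Formula (Fin m ⊕ Fin 1) :=
  iAllsOld (fun p => p : (Fin m ⊕ Fin 1) ⊕ Fin 1 → (Fin m ⊕ Fin 1) ⊕ Fin 1)
    (ltFml (Term.var (Sum.inr 0)) (Term.var (Sum.inl (Sum.inr 0))) ⟹
      θ.relabel (Sum.elim (fun i => Sum.inl (Sum.inl i)) fun _ => Sum.inr 0))

/-- `∀x' ≤ x, θ(x', z̄)`, a formula with free variable `x` (and parameters). -/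
noncomputable def allLeX {m : ℕ} (θ : Lor.Formula (Fin m ⊕ Fin 1)) :
    Lor.Formula (Fin m ⊕ Fin 1) :=
  iAllsOld (fun p => p : (Fin m ⊕ Fin 1) ⊕ Fin 1 → (Fin m ⊕ Fin 1) ⊕ Fin 1)
    (leFml (Term.var (Sum.inr 0)) (Term.var (Sum.inl (Sum.inr 0))) ⟹
      θ.relabel (Sum.elim (fun i => Sum.inl (Sum.inl i)) fun _ => Sum.inr 0))

/-- The conjunction `⋀_{k<j} θ(k, z̄)`. -/
def conjNum {m : ℕ} (θ : Lor.Formula (Fin m ⊕ Fin 1)) : ℕ → Lor.Formula (Fin m)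
  | 0 => ⊤
  | j + 1 => conjNum θ j ⊓ substP θ (numT j)

/-- The conjunction `⋀_{k<j} θ(x+k, z̄)`. -/
def conjShift {m : ℕ} (θ : Lor.Formula (Fin m ⊕ Fin 1)) : ℕ → Lor.Formula (Fin m ⊕ Fin 1)
  | 0 => ⊤
  | j + 1 => conjShift θ j ⊓ substX θ (addT xT (numT j))

/-! ### Induction axioms -/

/-- The induction axiom `I_x θ`:
`∀z̄( θ(0,z̄) ∧ ∀x(θ(x,z̄) → θ(x+1,z̄)) → ∀x θ(x,z̄) )`. -/
noncomputable def indAx {m : ℕ} (θ : Lor.Formula (Fin m ⊕ Fin 1)) : Lor.Sentence :=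
  closeAll ((substP θ zeroT ⊓ allX (θ ⟹ substX θ (addT xT oneT))) ⟹ allX θ)

/-- The `<`-induction axiom `I^<_x θ`:
`∀z̄( ∀y(∀x<y θ(x,z̄) → θ(y,z̄)) → ∀x θ(x,z̄) )`. -/
noncomputable def indLtAx {m : ℕ} (θ : Lor.Formula (Fin m ⊕ Fin 1)) : Lor.Sentence :=
  closeAll (allX (allLtX θ ⟹ θ) ⟹ allX θ)

/-- The `(n+1)`-step induction axiom `I^{(n+1)-step}_x θ`:
`∀z̄( ⋀_{k<n+1} θ(k,z̄) ∧ ∀x(θ(x,z̄) → θ(x+n+1,z̄)) → ∀x θ(x,z̄) )`. -/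
noncomputable def indStepAx {m : ℕ} (n : ℕ) (θ : Lor.Formula (Fin m ⊕ Fin 1)) : Lor.Sentence :=
  closeAll ((conjNum θ (n + 1) ⊓ allX (θ ⟹ substX θ (addT xT (numT (n + 1))))) ⟹ allX θ)

/-- The `(n+1)`-induction axiom `I^{n+1}_x θ`:
`∀z̄( ⋀_{k<n+1} θ(k,z̄) ∧ ∀x(⋀_{k<n+1} θ(x+k,z̄) → θ(x+n+1,z̄)) → ∀x θ(x,z̄) )`. -/
noncomputable def indKAx {m : ℕ} (n : ℕ) (θ : Lor.Formula (Fin m ⊕ Fin 1)) : Lor.Sentence :=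
  closeAll ((conjNum θ (n + 1) ⊓ allX (conjShift θ (n + 1) ⟹ substX θ (addT xT (numT (n + 1))))) ⟹
    allX θ)

/-- The polynomial induction axiom `I^p_x θ`:
`∀z̄( θ(0,z̄) ∧ ∀x(θ(x,z̄) → θ(2x,z̄) ∧ θ(2x+1,z̄)) → ∀x θ(x,z̄) )`, where `2x` is `(1+1)×x`. -/
noncomputable def indPAx {m : ℕ} (θ : Lor.Formula (Fin m ⊕ Fin 1)) : Lor.Sentence :=
  closeAll ((substP θ zeroT ⊓
      allX (θ ⟹ substX θ (mulT twoT xT) ⊓ substX θ (addT (mulT twoT xT) oneT))) ⟹ allX θ)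

/-! ### Theories -/

/-- Peano arithmetic: `PA⁻` plus induction for all `L_OR` formulas. -/
noncomputable def PA : Lor.Theory :=
  PAminus ∪ {σ | ∃ (m : ℕ) (θ : Lor.Formula (Fin m ⊕ Fin 1)), σ = indAx θ}

/-- `IOpen`: `PA⁻` plus induction for all quantifier-free `L_OR` formulas. -/
noncomputable def IOpen : Lor.Theory :=
  PAminus ∪ {σ | ∃ (m : ℕ) (θ : Lor.Formula (Fin m ⊕ Fin 1)), θ.IsQF ∧ σ = indAx θ}

/-! ### Notions of inductiveness

A formula `φ(x)` with exactly one free variable `x` is represented as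
`φ : Lor.Formula (Fin 0 ⊕ Fin 1)` (no parameters). -/

/-- Formulas `φ(x)` with exactly one free variable `x`. -/
abbrev OneVarFormula : Type := Lor.Formula (Fin 0 ⊕ Fin 1)

/-- The sentence `∀x φ(x)`. -/
noncomputable def allS (φ : OneVarFormula) : Lor.Sentence := closeAll (allX φ)

/-- `φ(x)` is inductive: `PA⁻ ⊢ φ(0)` and `PA⁻ ⊢ ∀x(φ(x) → φ(x+1))`. -/
noncomputable def IsInductive (φ : OneVarFormula) : Prop :=
  PAminus ⊨ᵇ closeAll (substP φ zeroT) ∧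
    PAminus ⊨ᵇ closeAll (allX (φ ⟹ substX φ (addT xT oneT)))

/-- `φ(x)` is `<`-inductive: `PA⁻ ⊢ ∀y(∀x<y φ(x) → φ(y))`. -/
noncomputable def IsLtInductive (φ : OneVarFormula) : Prop :=
  PAminus ⊨ᵇ closeAll (allX (allLtX φ ⟹ φ))

/-- `φ(x)` is `(n+1)`-step inductive:
`PA⁻ ⊢ ⋀_{k<n+1} φ(k) ∧ ∀x(φ(x) → φ(x+n+1))`. -/
noncomputable def IsStepInductive (n : ℕ) (φ : OneVarFormula) : Prop :=
  PAminus ⊨ᵇ closeAll (conjNum φ (n + 1) ⊓ allX (φ ⟹ substX φ (addT xT (numT (n + 1)))))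

/-- `φ(x)` is `(n+1)`-inductive:
`PA⁻ ⊢ ⋀_{k<n+1} φ(k) ∧ ∀x(⋀_{k<n+1} φ(x+k) → φ(x+n+1))`. -/
noncomputable def IsKInductive (n : ℕ) (φ : OneVarFormula) : Prop :=
  PAminus ⊨ᵇ
    closeAll (conjNum φ (n + 1) ⊓ allX (conjShift φ (n + 1) ⟹ substX φ (addT xT (numT (n + 1)))))

/-- `φ(x)` is p-inductive (polynomially inductive):
`PA⁻ ⊢ φ(0) ∧ ∀x(φ(x) → φ(2x) ∧ φ(2x+1))`. -/
noncomputable def IsPInductive (φ : OneVarFormula) : Prop :=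
  PAminus ⊨ᵇ closeAll (substP φ zeroT ⊓
    allX (φ ⟹ substX φ (mulT twoT xT) ⊓ substX φ (addT (mulT twoT xT) oneT)))

/-! ### Cuts -/

/-- `φ(x)` is a cut: an inductive formula with `PA⁻ ⊢ ∀x∀y(x<y ∧ φ(y) → φ(x))`. -/
noncomputable def IsCut (φ : OneVarFormula) : Prop :=
  IsInductive φ ∧
    PAminus ⊨ᵇ closeAll
      (ltFml (Term.var (Sum.inr 0) : Lor.Term (Fin 0 ⊕ Fin 2)) (Term.var (Sum.inr 1)) ⊓
          φ.relabel (Sum.elim (fun i => Sum.inl i) fun _ => Sum.inr 1) ⟹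
        φ.relabel (Sum.elim (fun i => Sum.inl i) fun _ => Sum.inr 0))

/-- `φ(x)` is an a-cut: a cut with `PA⁻ ⊢ ∀x(φ(x) → φ(x+x))`. -/
noncomputable def IsACut (φ : OneVarFormula) : Prop :=
  IsCut φ ∧ PAminus ⊨ᵇ closeAll (allX (φ ⟹ substX φ (addT xT xT)))

/-- `φ(x)` is an am-cut: an a-cut with `PA⁻ ⊢ ∀x(φ(x) → φ(x×x))`. -/
noncomputable def IsAMCut (φ : OneVarFormula) : Prop :=
  IsACut φ ∧ PAminus ⊨ᵇ closeAll (allX (φ ⟹ substX φ (mulT xT xT)))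

/-!
Take `φ := ψ_{θ₀} ∧ ψ_{θ₁}`, where `ψ_θ(x)` says: for all parameters `z̄` satisfying the
hypothesis of `I θ`, `θ(y, z̄)` holds for every `y ≤ x`. In `PA⁻`, `ψ_θ(0)` holds because `0` is
the least element, and `ψ_θ(x) → ψ_θ(x+1)` because `y ≤ x + 1` means `y ≤ x` or `y = x + 1`.
Conversely `∀x ψ_θ(x)` yields `I θ` by taking `y = x`.
-/

lemma realize_iAllsOld {L : Language} {M : Type*} [L.Structure M] {α β γ : Type*} [Finite γ]
    (f : α → β ⊕ γ) {φ : L.Formula α} {v : β → M} :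
    (iAllsOld f φ).Realize v ↔ ∀ i : γ → M, φ.Realize fun a => Sum.elim v i (f a) := by
  let e := Classical.choice (Classical.choose_spec (Finite.exists_equiv_fin γ))
  rw [iAllsOld]
  simp only [BoundedFormula.realize_alls, BoundedFormula.realize_relabel, Function.comp_def,
    Nat.add_zero, Fin.castAdd_zero, Sum.elim_map, id_eq]
  refine (e.arrowCongr (Equiv.refl M)).symm.forall_congr fun i => ?_
  simp only [Equiv.arrowCongr, Function.comp_def]
  exact iff_of_eq (congrArg (BoundedFormula.Realize φ _) (Subsingleton.elim _ _))

lemma realize_subst_of_forall {L : Language} {M : Type*} [L.Structure M] {α β : Type*}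
    {φ : L.Formula α} {tf : α → L.Term β} {v : β → M} {w : α → M}
    (h : ∀ a, (tf a).realize v = w a) :
    Formula.Realize (φ.subst tf) v ↔ φ.Realize w := by
  rw [Formula.Realize, BoundedFormula.realize_subst, funext h]
  rfl

namespace Lor

variable (M : Type*) [Lor.Structure M]

abbrev instZero : Zero M := ⟨Structure.funMap (L := Lor) (LorFunc.zero : Lor.Functions 0) ![]⟩

abbrev instOne : One M := ⟨Structure.funMap (L := Lor) (LorFunc.one : Lor.Functions 0) ![]⟩

abbrev instAdd : Add M :=
  ⟨fun x y => Structure.funMap (L := Lor) (LorFunc.add : Lor.Functions 2) ![x, y]⟩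

abbrev instLT : LT M :=
  ⟨fun x y => Structure.RelMap (L := Lor) (LorRel.lt : Lor.Relations 2) ![x, y]⟩

end Lor

-- Local only: a global instance would put a second `Zero`, `Add`, ... on types that have one.
attribute [local instance] Lor.instZero Lor.instOne Lor.instAdd Lor.instLT

section Semantics

variable {M : Type*} [Lor.Structure M] {α : Type}

@[simp] lemma realize_zeroT (v : α → M) : (zeroT : Lor.Term α).realize v = 0 :=
  congrArg (Structure.funMap (L := Lor) _) (Subsingleton.elim _ _)

@[simp] lemma realize_oneT (v : α → M) : (oneT : Lor.Term α).realize v = 1 :=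
  congrArg (Structure.funMap (L := Lor) _) (Subsingleton.elim _ _)

@[simp] lemma realize_addT (t u : Lor.Term α) (v : α → M) :
    (addT t u).realize v = t.realize v + u.realize v := by
  refine congrArg (Structure.funMap (L := Lor) _) (funext fun i => ?_)
  fin_cases i <;> rfl

@[simp] lemma realize_ltBF {n : ℕ} (t u : Lor.Term (α ⊕ Fin n)) (v : α → M) (xs : Fin n → M) :
    (ltBF t u).Realize v xs ↔ t.realize (Sum.elim v xs) < u.realize (Sum.elim v xs) := by
  refine iff_of_eq (congrArg (Structure.RelMap (L := Lor) _) (funext fun i => ?_))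
  fin_cases i <;> rfl

@[simp] lemma realize_ltFml (t u : Lor.Term α) (v : α → M) :
    (ltFml t u).Realize v ↔ t.realize v < u.realize v := by
  refine iff_of_eq (congrArg (Structure.RelMap (L := Lor) _) (funext fun i => ?_))
  fin_cases i <;> simp

@[simp] lemma realize_leFml (t u : Lor.Term α) (v : α → M) :
    (leFml t u).Realize v ↔ t.realize v < u.realize v ∨ t.realize v = u.realize v := by
  simp [leFml]

end Semantics

section FormulaSemantics

variable {M : Type*} [Lor.Structure M] {m : ℕ}

lemma realize_closeAll {α : Type} [Finite α] (φ : Lor.Formula α) :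
    M ⊨ closeAll φ ↔ ∀ v : α → M, φ.Realize v := by
  rw [closeAll, Sentence.Realize, realize_iAllsOld]
  rfl

lemma realize_allX (θ : Lor.Formula (Fin m ⊕ Fin 1)) (v : Fin m → M) :
    (allX θ).Realize v ↔ ∀ a : M, θ.Realize (Sum.elim v fun _ => a) := by
  rw [allX, realize_iAllsOld]
  exact (Equiv.funUnique (Fin 1) M).forall_congr_left

lemma realize_substP (θ : Lor.Formula (Fin m ⊕ Fin 1)) (t : Lor.Term (Fin m)) (v : Fin m → M) :
    (substP θ t).Realize v ↔ θ.Realize (Sum.elim v fun _ => t.realize v) :=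
  realize_subst_of_forall <| by rintro (i | i) <;> rfl

lemma realize_substX (θ : Lor.Formula (Fin m ⊕ Fin 1)) (t : Lor.Term (Fin m ⊕ Fin 1))
    (v : Fin m ⊕ Fin 1 → M) :
    (substX θ t).Realize v ↔ θ.Realize (Sum.elim (v ∘ Sum.inl) fun _ => t.realize v) :=
  realize_subst_of_forall <| by rintro (i | i) <;> rfl

lemma realize_allLeX (θ : Lor.Formula (Fin m ⊕ Fin 1)) (v : Fin m ⊕ Fin 1 → M) :
    (allLeX θ).Realize v ↔ ∀ y : M, y < v (Sum.inr 0) ∨ y = v (Sum.inr 0) →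
      θ.Realize (Sum.elim (v ∘ Sum.inl) fun _ => y) := by
  rw [allLeX, realize_iAllsOld]
  refine (Equiv.funUnique (Fin 1) M).forall_congr_left.trans (forall_congr' fun y => ?_)
  rw [Formula.realize_imp, realize_leFml, Formula.realize_relabel]
  exact imp_congr Iff.rfl (iff_of_eq (congrArg _ (funext <| by rintro (i | i) <;> rfl)))

end FormulaSemantics

namespace PAminus

variable {M : Type*} [Lor.Structure M] [PAminus.Model M]

lemma add_comm (x y : M) : x + y = y + x := by
  have h := Theory.realize_sentence_of_mem (M := M) PAminus
    (show (∀' ∀' (addT &0 &1 =' addT &1 &0) : Lor.Sentence) ∈ PAminus by simp [PAminus])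
  simpa [Sentence.Realize, Formula.Realize, Fin.snoc] using h x y

lemma add_zero (x : M) : x + 0 = x := by
  have h := Theory.realize_sentence_of_mem (M := M) PAminus
    (show (∀' (addT &0 zeroT =' &0) : Lor.Sentence) ∈ PAminus by simp [PAminus])
  simpa [Sentence.Realize, Formula.Realize, Fin.snoc] using h x

lemma lt_trans {x y z : M} (hxy : x < y) (hyz : y < z) : x < z := by
  have h := Theory.realize_sentence_of_mem (M := M) PAminus
    (show (∀' ∀' ∀' (ltBF &0 &1 ⊓ ltBF &1 &2 ⟹ ltBF &0 &2) : Lor.Sentence) ∈ PAminus by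
      simp [PAminus])
  revert hxy hyz
  simpa [Sentence.Realize, Formula.Realize, Fin.snoc] using h x y z

lemma lt_irrefl (x : M) : ¬x < x := by
  have h := Theory.realize_sentence_of_mem (M := M) PAminus
    (show (∀' ∼(ltBF &0 &0) : Lor.Sentence) ∈ PAminus by simp [PAminus])
  simpa [Sentence.Realize, Formula.Realize, Fin.snoc] using h x

lemma lt_trichotomy (x y : M) : x < y ∨ x = y ∨ y < x := by
  have h := Theory.realize_sentence_of_mem (M := M) PAminus
    (show (∀' ∀' (ltBF &0 &1 ⊔ &0 =' &1 ⊔ ltBF &1 &0) : Lor.Sentence) ∈ PAminus by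
      simp [PAminus])
  simpa [Sentence.Realize, Formula.Realize, Fin.snoc, or_assoc] using h x y

lemma add_lt_add_right {x y : M} (h : x < y) (z : M) : x + z < y + z := by
  have h' := Theory.realize_sentence_of_mem (M := M) PAminus
    (show (∀' ∀' ∀' (ltBF &0 &1 ⟹ ltBF (addT &0 &2) (addT &1 &2)) : Lor.Sentence) ∈ PAminus by
      simp [PAminus])
  revert h
  simpa [Sentence.Realize, Formula.Realize, Fin.snoc] using h' x y z

lemma lt_iff_exists_add_add_one (x y : M) : x < y ↔ ∃ z, x + z + 1 = y := by
  have h := Theory.realize_sentence_of_mem (M := M) PAminus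
    (show (∀' ∀' (ltBF &0 &1 ⇔ ∃' (addT (addT &0 &2) oneT =' &1)) : Lor.Sentence) ∈ PAminus by
      simp [PAminus])
  simpa [Sentence.Realize, Formula.Realize, Fin.snoc] using h x y

lemma zero_lt_or_eq (x : M) : 0 < x ∨ 0 = x := by
  have h := Theory.realize_sentence_of_mem (M := M) PAminus
    (show (∀' (ltBF zeroT &0 ⊔ zeroT =' &0) : Lor.Sentence) ∈ PAminus by simp [PAminus])
  simpa [Sentence.Realize, Formula.Realize, Fin.snoc] using h x

lemma not_lt_zero (y : M) : ¬y < 0 := by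
  rcases zero_lt_or_eq y with h | h
  · exact fun h' => lt_irrefl y (lt_trans h' h)
  · exact h ▸ lt_irrefl 0

lemma lt_add_of_pos_right (x : M) {z : M} (hz : 0 < z) : x < x + z := by
  have h := add_lt_add_right hz x
  rwa [add_comm 0 x, add_zero, add_comm z x] at h

lemma lt_or_eq_of_lt_add_one {x y : M} (h : y < x + 1) : y < x ∨ y = x := by
  rcases lt_trichotomy y x with hyx | hyx | hxy
  · exact Or.inl hyx
  · exact Or.inr hyx
  exfalso
  obtain ⟨z, rfl⟩ := (lt_iff_exists_add_add_one x y).1 hxy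
  rcases zero_lt_or_eq z with hz | rfl
  · exact lt_irrefl _ (lt_trans h (add_lt_add_right (lt_add_of_pos_right x hz) 1))
  · rw [add_zero] at h
    exact lt_irrefl _ h

end PAminus

section Inductive

variable {M : Type*} [Lor.Structure M]

lemma realize_allS (φ : OneVarFormula) :
    M ⊨ allS φ ↔ ∀ (v : Fin 0 → M) (a : M), φ.Realize (Sum.elim v fun _ => a) := by
  simp only [allS, realize_closeAll, realize_allX]

lemma realize_allS_inf (φ ψ : OneVarFormula) :
    M ⊨ allS (φ ⊓ ψ) ↔ M ⊨ allS φ ∧ M ⊨ allS ψ := by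
  simp only [realize_allS, Formula.realize_inf, forall_and]

lemma isInductive_iff (φ : OneVarFormula) :
    IsInductive φ ↔ ∀ (M : Theory.ModelType.{0, 0, 0} PAminus) (v : Fin 0 → M),
      φ.Realize (Sum.elim v fun _ => 0) ∧
        ∀ a : M, φ.Realize (Sum.elim v fun _ => a) → φ.Realize (Sum.elim v fun _ => a + 1) := by
  simp only [IsInductive, Theory.models_sentence_iff, realize_closeAll, realize_substP,
    realize_allX, Formula.realize_imp, realize_substX, forall_and, realize_zeroT, realize_addT,
    realize_oneT, xT, Term.realize_var, Sum.elim_comp_inl, Sum.elim_inr]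

lemma IsInductive.inf {φ ψ : OneVarFormula} (hφ : IsInductive φ) (hψ : IsInductive ψ) :
    IsInductive (φ ⊓ ψ) := by
  rw [isInductive_iff] at *
  intro M v
  obtain ⟨hφ0, hφs⟩ := hφ M v
  obtain ⟨hψ0, hψs⟩ := hψ M v
  simp only [Formula.realize_inf]
  exact ⟨⟨hφ0, hψ0⟩, fun a ha => ⟨hφs a ha.1, hψs a ha.2⟩⟩

end Inductive

section IndUpTo

variable {m : ℕ}

noncomputable def indHyp (θ : Lor.Formula (Fin m ⊕ Fin 1)) : Lor.Formula (Fin m) :=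
  substP θ zeroT ⊓ allX (θ ⟹ substX θ (addT xT oneT))

/-- `ψ_θ(x) := ∀z̄ (indHyp θ (z̄) → ∀y ≤ x, θ(y, z̄))`: the relabelling binds the parameters `z̄`
and keeps `x` free. -/
noncomputable def indUpTo (θ : Lor.Formula (Fin m ⊕ Fin 1)) : OneVarFormula :=
  iAllsOld (Sum.elim Sum.inr fun _ => Sum.inl (Sum.inr 0))
    ((indHyp θ).relabel Sum.inl ⟹ allLeX θ)

variable {M : Type*} [Lor.Structure M]

lemma realize_indHyp (θ : Lor.Formula (Fin m ⊕ Fin 1)) (zs : Fin m → M) :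
    (indHyp θ).Realize zs ↔ θ.Realize (Sum.elim zs fun _ => 0) ∧
      ∀ a : M, θ.Realize (Sum.elim zs fun _ => a) → θ.Realize (Sum.elim zs fun _ => a + 1) := by
  simp only [indHyp, Formula.realize_inf, realize_substP, realize_allX, Formula.realize_imp,
    realize_substX, realize_zeroT, realize_addT, realize_oneT, xT, Term.realize_var,
    Sum.elim_comp_inl, Sum.elim_inr]

lemma realize_indUpTo (θ : Lor.Formula (Fin m ⊕ Fin 1)) (v : Fin 0 → M) (a : M) :
    (indUpTo θ).Realize (Sum.elim v fun _ => a) ↔ ∀ zs : Fin m → M, (indHyp θ).Realize zs →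
      ∀ y : M, y < a ∨ y = a → θ.Realize (Sum.elim zs fun _ => y) := by
  rw [indUpTo, realize_iAllsOld]
  refine forall_congr' fun zs => ?_
  rw [Formula.realize_imp, Formula.realize_relabel, realize_allLeX]
  rfl

lemma realize_indUpTo_zero [PAminus.Model M] (θ : Lor.Formula (Fin m ⊕ Fin 1)) (v : Fin 0 → M) :
    (indUpTo θ).Realize (Sum.elim v fun _ => 0) := by
  rw [realize_indUpTo]
  rintro zs hyp y (hy | rfl)
  · exact absurd hy (PAminus.not_lt_zero y)
  · exact ((realize_indHyp θ zs).1 hyp).1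

lemma realize_indUpTo_add_one [PAminus.Model M] (θ : Lor.Formula (Fin m ⊕ Fin 1))
    (v : Fin 0 → M) {a : M} (ha : (indUpTo θ).Realize (Sum.elim v fun _ => a)) :
    (indUpTo θ).Realize (Sum.elim v fun _ => a + 1) := by
  rw [realize_indUpTo] at ha ⊢
  rintro zs hyp y (hy | rfl)
  · exact ha zs hyp y (PAminus.lt_or_eq_of_lt_add_one hy)
  · exact ((realize_indHyp θ zs).1 hyp).2 a (ha zs hyp a (Or.inr rfl))

lemma isInductive_indUpTo (θ : Lor.Formula (Fin m ⊕ Fin 1)) : IsInductive (indUpTo θ) :=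
  (isInductive_iff _).2 fun _ v =>
    ⟨realize_indUpTo_zero θ v, fun _ => realize_indUpTo_add_one θ v⟩

lemma realize_indAx_of_realize_allS_indUpTo (θ : Lor.Formula (Fin m ⊕ Fin 1))
    (h : M ⊨ allS (indUpTo θ)) : M ⊨ indAx θ := by
  rw [realize_allS] at h
  change M ⊨ closeAll (indHyp θ ⟹ allX θ)
  refine (realize_closeAll _).2 fun zs => ?_
  rw [Formula.realize_imp, realize_allX]
  exact fun hyp a => (realize_indUpTo θ default a).1 (h default a) zs hyp a (Or.inr rfl)

end IndUpTo

/-- For all `L_OR` formulas `θ₀(x, z̄)` and `θ₁(x, z̄)`, there is an inductive formula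
`φ(x)` such that `PA⁻ ⊢ ∀x φ(x) → (I θ₀ ∧ I θ₁)`. -/
theorem stmt1 {m₀ m₁ : ℕ} (θ₀ : Lor.Formula (Fin m₀ ⊕ Fin 1))
    (θ₁ : Lor.Formula (Fin m₁ ⊕ Fin 1)) :
    ∃ φ : OneVarFormula, IsInductive φ ∧ PAminus ⊨ᵇ (allS φ ⟹ indAx θ₀ ⊓ indAx θ₁) := by
  refine ⟨indUpTo θ₀ ⊓ indUpTo θ₁, (isInductive_indUpTo θ₀).inf (isInductive_indUpTo θ₁), ?_⟩
  refine Theory.models_sentence_iff.2 fun M => (Sentence.realize_imp M).2 fun h => ?_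
  obtain ⟨h₀, h₁⟩ := (realize_allS_inf _ _).1 h
  exact (Sentence.realize_inf M).2
    ⟨realize_indAx_of_realize_allS_indUpTo θ₀ h₀, realize_indAx_of_realize_allS_indUpTo θ₁ h₁⟩
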